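/- arXiv:2604.09789 — 4 statements merged into one kernel-verified Lean document; each statement's English description precedes it below -/
import Mathlib

section
/- Let f: ℝ^d → ℝ be differentiable, g: ℝ^d → ℝ convex, proper, lower semicontinuous, and suppose v* is a global minimizer of f + g. Then for every μ > 0, ∇f(v*) + ∇M_{μg}(v* − μ∇f(v*)) = 0, where M_{μg} is the Moreau envelope of g with parameter μ. -/
/-!
Optimality of `v*` for `f + g`, with `g` convex, says that `s = -∇f(v*)` is a subgradient of `g`
at `v*`. For a subgradient `s` of `g` at `x`, completing the square shows that
`v ↦ M_{μg}(v) - ⟪s, v⟫` is minimal at `x + μ • s` (that is, `prox_{μg}(x + μ • s) = x`), so the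
gradient of the envelope there is `s`. Taking `x = v*` gives `∇M_{μg}(v* - μ∇f(v*)) = -∇f(v*)`.
-/

open MeasureTheory Set

/-- The Moreau envelope of `g` with parameter `μ`. -/
noncomputable def moreau {d : ℕ} (g : EuclideanSpace ℝ (Fin d) → ℝ) (μ : ℝ)
    (v : EuclideanSpace ℝ (Fin d)) : ℝ :=
  ⨅ u : EuclideanSpace ℝ (Fin d), (g u + ‖v - u‖ ^ 2 / (2 * μ))

open RealInnerProductSpace

section InnerProductSpace

variable {E : Type*} [NormedAddCommGroup E] [InnerProductSpace ℝ E]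

def HasSubgradientAt (g : E → ℝ) (s x : E) : Prop :=
  ∀ u, g x + ⟪s, u - x⟫ ≤ g u

theorem real_inner_le_norm_sq_div_add {μ : ℝ} (hμ : 0 < μ) (a b : E) :
    ⟪a, b⟫ ≤ ‖b‖ ^ 2 / (2 * μ) + μ / 2 * ‖a‖ ^ 2 := by
  have hsq : 0 ≤ ‖b - μ • a‖ ^ 2 := sq_nonneg _
  rw [norm_sub_sq_real, real_inner_smul_right, norm_smul, Real.norm_of_nonneg hμ.le,
    real_inner_comm] at hsq
  rw [div_add' _ _ _ (by positivity), le_div_iff₀ (by positivity)]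
  nlinarith

variable [CompleteSpace E]

theorem hasSubgradientAt_neg_of_isMin_add {f g : E → ℝ} {f'x x : E}
    (hf : HasGradientAt f f'x x) (hg : ConvexOn ℝ univ g) (hmin : ∀ v, f x + g x ≤ f v + g v) :
    HasSubgradientAt g (-f'x) x := by
  intro u
  -- For `t ∈ [0, 1]` convexity gives `g (x + t • (u - x)) ≤ g x + t * (g u - g x)`, hence
  -- `φ t ≥ (f + g) (x + t • (u - x)) - g x ≥ φ 0`: the derivative of `φ` at `0` is nonnegative.
  set φ : ℝ → ℝ := fun t => f (x + t • (u - x)) + t * (g u - g x)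
  have hφ : HasDerivAt φ (⟪f'x, u - x⟫ + (g u - g x)) 0 := by
    have hfline : HasDerivAt (fun t : ℝ => f (x + t • (u - x))) ⟪f'x, u - x⟫ 0 := by
      simpa [Function.comp_def] using hf.hasFDerivAt.comp_hasDerivAt_of_eq (x := 0)
        (((hasDerivAt_id (0 : ℝ)).smul_const (u - x)).const_add x) (by simp)
    exact hfline.add (hasDerivAt_mul_const _)
  have hφmin : IsMinOn φ (Icc 0 1) 0 := by
    rintro t ⟨ht0, ht1⟩
    have hconv := hg.2 (mem_univ x) (mem_univ u) (sub_nonneg.2 ht1) ht0 (sub_add_cancel 1 t)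
    have hpt : (1 - t) • x + t • u = x + t • (u - x) := by module
    rw [hpt, smul_eq_mul, smul_eq_mul] at hconv
    have hopt := hmin (x + t • (u - x))
    simp only [φ, mem_ofPred_eq, zero_smul, add_zero, zero_mul]
    nlinarith
  have hone : (1 : ℝ) ∈ posTangentConeAt (Icc 0 1) 0 :=
    mem_posTangentConeAt_of_segment_subset (by simp)
  have hderiv := hφmin.localize.hasFDerivWithinAt_nonneg hφ.hasFDerivAt.hasFDerivWithinAt hone
  rw [ContinuousLinearMap.toSpanSingleton_apply, one_smul] at hderiv
  rw [inner_neg_left]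
  linarith

theorem IsMinOn.hasGradientAt_eq_of_sub_inner {F : E → ℝ} {s w m : E}
    (hmin : IsMinOn (fun v => F v - ⟪s, v⟫) univ w) (hF : HasGradientAt F m w) : m = s := by
  have hzero := (hmin.isLocalMin Filter.univ_mem).hasFDerivAt_eq_zero
    (hF.hasFDerivAt.sub (innerSL ℝ s).hasFDerivAt)
  apply (InnerProductSpace.toDual ℝ E).injective
  exact sub_eq_zero.1 hzero

end InnerProductSpace

section Moreau

variable {d : ℕ} {g : EuclideanSpace ℝ (Fin d) → ℝ} {s x : EuclideanSpace ℝ (Fin d)} {μ : ℝ}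

namespace HasSubgradientAt

theorem le_add_norm_sq_div (hs : HasSubgradientAt g s x) (hμ : 0 < μ)
    (v u : EuclideanSpace ℝ (Fin d)) :
    g x + ⟪s, v - x⟫ - μ / 2 * ‖s‖ ^ 2 ≤ g u + ‖v - u‖ ^ 2 / (2 * μ) := by
  have hsub := hs u
  have hyoung := real_inner_le_norm_sq_div_add hμ s (v - u)
  have hsplit : ⟪s, v - x⟫ = ⟪s, u - x⟫ + ⟪s, v - u⟫ := by
    rw [← inner_add_right, sub_add_sub_cancel']
  linarith

theorem le_moreau (hs : HasSubgradientAt g s x) (hμ : 0 < μ) (v : EuclideanSpace ℝ (Fin d)) :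
    g x + ⟪s, v - x⟫ - μ / 2 * ‖s‖ ^ 2 ≤ moreau g μ v :=
  le_ciInf (hs.le_add_norm_sq_div hμ v)

theorem moreau_add_smul_le (hs : HasSubgradientAt g s x) (hμ : 0 < μ) :
    moreau g μ (x + μ • s) ≤ g x + μ / 2 * ‖s‖ ^ 2 :=
  calc moreau g μ (x + μ • s) ≤ g x + ‖x + μ • s - x‖ ^ 2 / (2 * μ) :=
        ciInf_le ⟨_, forall_mem_range.2 (hs.le_add_norm_sq_div hμ (x + μ • s))⟩ x
    _ = g x + μ / 2 * ‖s‖ ^ 2 := by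
        rw [add_sub_cancel_left, norm_smul, Real.norm_of_nonneg hμ.le]
        field_simp

theorem isMinOn_moreau_sub_inner (hs : HasSubgradientAt g s x) (hμ : 0 < μ) :
    IsMinOn (fun v => moreau g μ v - ⟪s, v⟫) univ (x + μ • s) := by
  intro v _
  have hlower := hs.le_moreau hμ v
  have hupper := hs.moreau_add_smul_le hμ
  rw [inner_sub_right] at hlower
  simp only [mem_ofPred_eq, inner_add_right, real_inner_smul_right, real_inner_self_eq_norm_sq]
  linarith

theorem hasGradientAt_moreau_add_smul_eq (hs : HasSubgradientAt g s x) (hμ : 0 < μ)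
    {m : EuclideanSpace ℝ (Fin d)} (hm : HasGradientAt (moreau g μ) m (x + μ • s)) : m = s :=
  (hs.isMinOn_moreau_sub_inner hμ).hasGradientAt_eq_of_sub_inner hm

end HasSubgradientAt

end Moreau

theorem stmt_1_general {d : ℕ} (f g : EuclideanSpace ℝ (Fin d) → ℝ)
    (f' : EuclideanSpace ℝ (Fin d) → EuclideanSpace ℝ (Fin d))
    (hf : ∀ x, HasGradientAt f (f' x) x)
    (hconv : ConvexOn ℝ Set.univ g)
    (vstar : EuclideanSpace ℝ (Fin d))
    (hmin : ∀ v, f vstar + g vstar ≤ f v + g v)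
    (μ : ℝ) (hμ : 0 < μ)
    (Mg : EuclideanSpace ℝ (Fin d) → EuclideanSpace ℝ (Fin d))
    (hMg : ∀ v, HasGradientAt (moreau g μ) (Mg v) v) :
    f' vstar + Mg (vstar - μ • f' vstar) = 0 := by
  have hs : HasSubgradientAt g (-f' vstar) vstar :=
    hasSubgradientAt_neg_of_isMin_add (hf vstar) hconv hmin
  have hw : vstar - μ • f' vstar = vstar + μ • -f' vstar := by
    rw [smul_neg, sub_eq_add_neg]
  rw [hw, hs.hasGradientAt_moreau_add_smul_eq hμ (hMg _), add_neg_cancel]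

/-- If `v*` is a global minimizer of `f + g` with `f` differentiable (with gradient `f'`)
and `g` convex, proper, lsc, then `∇f(v*) + ∇M_{μg}(v* − μ∇f(v*)) = 0` for every `μ > 0`. -/
theorem stmt_1 {d : ℕ} (f g : EuclideanSpace ℝ (Fin d) → ℝ)
    (f' : EuclideanSpace ℝ (Fin d) → EuclideanSpace ℝ (Fin d))
    (hf : ∀ x, HasGradientAt f (f' x) x)
    (hconv : ConvexOn ℝ Set.univ g) (hlsc : LowerSemicontinuous g)
    (vstar : EuclideanSpace ℝ (Fin d))
    (hmin : ∀ v, f vstar + g vstar ≤ f v + g v)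
    (μ : ℝ) (hμ : 0 < μ)
    (Mg : EuclideanSpace ℝ (Fin d) → EuclideanSpace ℝ (Fin d))
    (hMg : ∀ v, HasGradientAt (moreau g μ) (Mg v) v) :
    f' vstar + Mg (vstar - μ • f' vstar) = 0 :=
  stmt_1_general f g f' hf hconv vstar hmin μ hμ Mg hMg
end

section
/- Let ℰ: ℝ^d → ℝ be continuous, bounded below by Ě, and satisfy the growth bounds c_l‖v‖₂^l − C_l ≤ ℰ(v) − Ě ≤ c_u‖v‖₂^l + C_u for some l, c_l, c_u, C_l, C_u > 0. Fix α > 0 and 0 < p ≤ q. Then there exists a constant C_Con, depending only on α, p, q, l, c_u, c_l, C_u, C_l, Ě, such that for every probability measure μ on ℝ^d with finite q-th moment, (∫‖v‖₂^p e^{−αℰ(v)} dμ) / (∫e^{−αℰ(v)} dμ) ≤ (C_Con · ∫‖v‖₂^q dμ)^{p/q}. -/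
/-!
With `M = ∫ ‖v‖^q dμ` and `R^q = 2M`, Markov's inequality puts mass at least `1/2` on the ball of
radius `R`, where the Gibbs weight is at least of order `exp(-α c_u R^l)`; this bounds the
normalisation `Z` from below. Split the numerator at a radius `S = γ R`, with `γ` chosen so that
`c_l S^l ≥ c_u R^l`: inside, `‖v‖^p ≤ S^p`; outside, the weight is at most of order
`exp(-α c_l S^l) ≲ Z` and `‖v‖^p ≤ S^(p-q) ‖v‖^q`, so the tail contributes `≲ S^(p-q) M Z ≤ S^p Z`.
Hence the ratio is `≲ S^p`, a constant multiple of `M^(p/q)`.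
-/

open MeasureTheory Set

theorem exists_one_le_and_le_mul_rpow (a : ℝ) {b l : ℝ} (hb : 0 < b) (hl : 0 < l) :
    ∃ γ : ℝ, 1 ≤ γ ∧ a ≤ b * γ ^ l := by
  refine ⟨max 1 ((|a| / b) ^ l⁻¹), le_max_left _ _, ?_⟩
  calc a ≤ b * (|a| / b) := by rw [mul_div_cancel₀ _ hb.ne']; exact le_abs_self a
    _ = b * ((|a| / b) ^ l⁻¹) ^ l := by
        rw [← Real.rpow_mul (by positivity), inv_mul_cancel₀ hl.ne', Real.rpow_one]
    _ ≤ b * max 1 ((|a| / b) ^ l⁻¹) ^ l := by gcongr; exact le_max_right _ _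

theorem rpow_mul_le_rpow_mul_add {r S p q x y : ℝ} (hr : 0 ≤ r) (hS : 0 < S) (hx : 0 ≤ x)
    (hy : 0 ≤ y) (hp : 0 ≤ p) (hpq : p ≤ q) (hxy : S < r → x ≤ y) :
    r ^ p * x ≤ S ^ p * x + S ^ (p - q) * y * r ^ q := by
  rcases le_or_gt r S with hrS | hSr
  · have : r ^ p * x ≤ S ^ p * x := by gcongr
    have : 0 ≤ S ^ (p - q) * y * r ^ q := by positivity
    linarith
  · have hsplit : r ^ p * x = r ^ (p - q) * x * r ^ q := by
      rw [mul_right_comm, ← Real.rpow_add (hS.trans hSr)]; ring_nf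
    have : r ^ (p - q) * x ≤ S ^ (p - q) * y :=
      mul_le_mul (Real.rpow_le_rpow_of_nonpos hS hSr.le (by linarith)) (hxy hSr) hx
        (by positivity)
    have : 0 ≤ S ^ p * x := by positivity
    rw [hsplit]; nlinarith [Real.rpow_nonneg hr q]

section

variable {E : Type*} [NormedAddCommGroup E] [MeasurableSpace E] {μ : Measure E}

theorem integral_rpow_norm_mul_eq_zero {p q : ℝ} (hp : 0 < p) (w : E → ℝ)
    (hint : Integrable (fun v => ‖v‖ ^ q) μ) (hM : ∫ v, ‖v‖ ^ q ∂μ = 0) :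
    ∫ v, ‖v‖ ^ p * w v ∂μ = 0 := by
  have hzero := (integral_eq_zero_iff_of_nonneg (fun v => by positivity) hint).mp hM
  refine integral_eq_zero_of_ae ?_
  filter_upwards [hzero] with v hv
  have hv0 : ‖v‖ = 0 := ((Real.rpow_eq_zero_iff_of_nonneg (norm_nonneg v)).mp hv).1
  simp [hv0, Real.zero_rpow hp.ne']

theorem integral_rpow_norm_mul_le_add {w : E → ℝ} {p q S T : ℝ} (hp : 0 ≤ p) (hpq : p ≤ q)
    (hS : 0 < S) (hT : 0 ≤ T) (hw0 : 0 ≤ w) (hwint : Integrable w μ)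
    (hint : Integrable (fun v => ‖v‖ ^ q) μ) (htail : ∀ v, S < ‖v‖ → w v ≤ T) :
    ∫ v, ‖v‖ ^ p * w v ∂μ ≤ S ^ p * ∫ v, w v ∂μ + S ^ (p - q) * T * ∫ v, ‖v‖ ^ q ∂μ := by
  rw [← integral_const_mul, ← integral_const_mul,
    ← integral_add (hwint.const_mul _) (hint.const_mul _)]
  refine integral_mono_of_nonneg (ae_of_all μ fun v => by have : 0 ≤ w v := hw0 v; positivity)
    ((hwint.const_mul _).add (hint.const_mul _)) (ae_of_all μ fun v => ?_)
  exact rpow_mul_le_rpow_mul_add (norm_nonneg v) hS (hw0 v) hT hp hpq (htail v)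

variable [OpensMeasurableSpace E] [IsProbabilityMeasure μ]

theorem one_half_le_measureReal_closedBall {q R : ℝ} (hq : 0 < q) (hR : 0 < R)
    (hint : Integrable (fun v => ‖v‖ ^ q) μ) (hM : 2 * ∫ v, ‖v‖ ^ q ∂μ ≤ R ^ q) :
    1 / 2 ≤ μ.real (Metric.closedBall 0 R) := by
  have hmarkov := mul_meas_ge_le_integral_of_nonneg (ae_of_all μ fun v => by positivity) hint
    (R ^ q)
  have hcompl : μ.real (Metric.closedBall 0 R)ᶜ ≤ μ.real {v : E | R ^ q ≤ ‖v‖ ^ q} := by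
    refine measureReal_mono fun v hv => ?_
    simp only [mem_compl_iff, Metric.mem_closedBall, dist_zero_right, not_le] at hv
    exact Real.rpow_le_rpow hR.le hv.le hq.le
  rw [measureReal_compl Metric.isClosed_closedBall.measurableSet, probReal_univ] at hcompl
  nlinarith [Real.rpow_pos_of_pos hR q]

theorem le_two_mul_integral_of_le_on_closedBall {w : E → ℝ} {m q R : ℝ} (hq : 0 < q)
    (hR : 0 < R) (hint : Integrable (fun v => ‖v‖ ^ q) μ) (hM : 2 * ∫ v, ‖v‖ ^ q ∂μ ≤ R ^ q)
    (hm : 0 ≤ m) (hw0 : 0 ≤ w) (hwint : Integrable w μ)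
    (hlo : ∀ v, ‖v‖ ≤ R → m ≤ w v) :
    m ≤ 2 * ∫ v, w v ∂μ := by
  have hball : m * μ.real (Metric.closedBall 0 R) ≤ ∫ v, w v ∂μ :=
    (setIntegral_ge_of_const_le_real Metric.isClosed_closedBall.measurableSet
      (measure_ne_top μ _) (fun v hv => hlo v (mem_closedBall_zero_iff.mp hv))
      hwint.integrableOn).trans (setIntegral_le_integral hwint (ae_of_all μ hw0))
  have := mul_le_mul_of_nonneg_left (one_half_le_measureReal_closedBall hq hR hint hM) hm
  linarith

variable {w : E → ℝ} {k k' β β' l : ℝ}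

theorem integral_rpow_norm_mul_div_integral_le (hw : Measurable w) (hk : 0 < k) (hβ : 0 ≤ β)
    (hβ' : 0 ≤ β') (hl : 0 ≤ l)
    (hlo : ∀ v, k * Real.exp (-(β * ‖v‖ ^ l)) ≤ w v)
    (hhi : ∀ v, w v ≤ k' * Real.exp (-(β' * ‖v‖ ^ l)))
    {p q R S : ℝ} (hp : 0 ≤ p) (hpq : p ≤ q) (hq : 0 < q) (hR : 0 < R) (hRS : R ≤ S)
    (hexp : β * R ^ l ≤ β' * S ^ l) (hint : Integrable (fun v => ‖v‖ ^ q) μ)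
    (hM : 2 * ∫ v, ‖v‖ ^ q ∂μ ≤ R ^ q) :
    (∫ v, ‖v‖ ^ p * w v ∂μ) / (∫ v, w v ∂μ) ≤ (1 + k' / k) * S ^ p := by
  have hS : 0 < S := hR.trans_le hRS
  have hw0 : 0 ≤ w := fun v => (by positivity : 0 ≤ k * _).trans (hlo v)
  have hk' : 0 ≤ k' := nonneg_of_mul_nonneg_left ((hw0 0).trans (hhi 0)) (Real.exp_pos _)
  have hwint : Integrable w μ := by
    refine (integrable_const k').mono' hw.aestronglyMeasurable (ae_of_all μ fun v => ?_)
    rw [Real.norm_of_nonneg (hw0 v)]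
    refine (hhi v).trans (mul_le_of_le_one_right hk' (Real.exp_le_one_iff.mpr ?_))
    exact neg_nonpos.mpr (by positivity)
  have hZ : k * Real.exp (-(β * R ^ l)) ≤ 2 * ∫ v, w v ∂μ :=
    le_two_mul_integral_of_le_on_closedBall hq hR hint hM (by positivity) hw0 hwint
      fun v hv => (hlo v).trans' (by gcongr)
  have hN := integral_rpow_norm_mul_le_add (T := k' * Real.exp (-(β' * S ^ l))) hp hpq hS
    (by positivity) hw0 hwint hint fun v hv => (hhi v).trans (by gcongr)
  have hdecay : Real.exp (-(β' * S ^ l)) ≤ 2 * (∫ v, w v ∂μ) / k := by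
    rw [le_div_iff₀ hk, mul_comm]
    exact (mul_le_mul_of_nonneg_left (by gcongr) hk.le).trans hZ
  have hmoment : S ^ (p - q) * ∫ v, ‖v‖ ^ q ∂μ ≤ S ^ p / 2 :=
    calc S ^ (p - q) * ∫ v, ‖v‖ ^ q ∂μ ≤ S ^ (p - q) * (S ^ q / 2) := by
          gcongr
          linarith [Real.rpow_le_rpow hR.le hRS hq.le]
      _ = S ^ p / 2 := by rw [← mul_div_assoc, ← Real.rpow_add hS, sub_add_cancel]
  rw [div_le_iff₀ (by linarith [(by positivity : 0 < k * Real.exp (-(β * R ^ l)))])]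
  calc ∫ v, ‖v‖ ^ p * w v ∂μ
      ≤ S ^ p * ∫ v, w v ∂μ
          + k' * Real.exp (-(β' * S ^ l)) * (S ^ (p - q) * ∫ v, ‖v‖ ^ q ∂μ) := by
        linarith
    _ ≤ S ^ p * ∫ v, w v ∂μ + k' * (2 * (∫ v, w v ∂μ) / k) * (S ^ p / 2) := by
        gcongr
        exact mul_nonneg hk' (div_nonneg (by linarith [integral_nonneg (μ := μ) hw0]) hk.le)
    _ = (1 + k' / k) * S ^ p * ∫ v, w v ∂μ := by ring

theorem exists_integral_rpow_norm_mul_div_integral_le (hw : Measurable w) (hk : 0 < k)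
    (hβ : 0 ≤ β) (hβ' : 0 < β') (hl : 0 < l)
    (hlo : ∀ v, k * Real.exp (-(β * ‖v‖ ^ l)) ≤ w v)
    (hhi : ∀ v, w v ≤ k' * Real.exp (-(β' * ‖v‖ ^ l))) {p q : ℝ} (hp : 0 < p) (hpq : p ≤ q) :
    ∃ C : ℝ, 0 < C ∧ ∀ μ : Measure E, IsProbabilityMeasure μ →
      Integrable (fun v => ‖v‖ ^ q) μ →
      (∫ v, ‖v‖ ^ p * w v ∂μ) / (∫ v, w v ∂μ) ≤ (C * ∫ v, ‖v‖ ^ q ∂μ) ^ (p / q) := by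
  have hq : 0 < q := hp.trans_le hpq
  have hk' : 0 ≤ k' := nonneg_of_mul_nonneg_left
    ((by positivity : 0 ≤ k * _).trans ((hlo 0).trans (hhi 0))) (Real.exp_pos _)
  obtain ⟨γ, hγ1, hγ⟩ := exists_one_le_and_le_mul_rpow β hβ' hl
  have hc : 0 < γ ^ p * (1 + k' / k) := by positivity
  refine ⟨(γ ^ p * (1 + k' / k)) ^ (q / p) * 2, by positivity, fun μ _ hint => ?_⟩
  rcases (integral_nonneg fun v => by positivity : 0 ≤ ∫ v, ‖v‖ ^ q ∂μ).eq_or_lt with hM | hM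
  · rw [← hM, integral_rpow_norm_mul_eq_zero hp w hint hM.symm, zero_div, mul_zero,
      Real.zero_rpow (by positivity)]
  set R := (2 * ∫ v, ‖v‖ ^ q ∂μ) ^ q⁻¹
  have hR : 0 < R := by positivity
  have hRq : R ^ q = 2 * ∫ v, ‖v‖ ^ q ∂μ := by
    rw [← Real.rpow_mul (by positivity), inv_mul_cancel₀ hq.ne', Real.rpow_one]
  have hRp : R ^ p = (2 * ∫ v, ‖v‖ ^ q ∂μ) ^ (p / q) := by
    rw [← Real.rpow_mul (by positivity), inv_mul_eq_div]
  have hRS : β * R ^ l ≤ β' * (γ * R) ^ l := by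
    rw [Real.mul_rpow (by positivity) hR.le, ← mul_assoc]
    gcongr
  have hcpow : ((γ ^ p * (1 + k' / k)) ^ (q / p)) ^ (p / q) = γ ^ p * (1 + k' / k) := by
    rw [← Real.rpow_mul hc.le, show q / p * (p / q) = 1 by field_simp, Real.rpow_one]
  refine (integral_rpow_norm_mul_div_integral_le hw hk hβ hβ'.le hl.le hlo hhi hp.le hpq hq hR
    (le_mul_of_one_le_left hR.le hγ1) hRS hint hRq.ge).trans_eq ?_
  rw [mul_assoc, Real.mul_rpow (by positivity) hR.le, Real.mul_rpow (by positivity) (by positivity),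
    hcpow, hRp]
  ring

end

theorem stmt_4_general {d : ℕ} (ℰ : EuclideanSpace ℝ (Fin d) → ℝ)
    (Ebar l c_l c_u C_l C_u α p q : ℝ)
    (hcont : Continuous ℰ)
    (hl : 0 < l) (hcl : 0 < c_l) (hcu : 0 < c_u)
    (hgrow_lo : ∀ v, c_l * ‖v‖ ^ l - C_l ≤ ℰ v - Ebar)
    (hgrow_hi : ∀ v, ℰ v - Ebar ≤ c_u * ‖v‖ ^ l + C_u)
    (hα : 0 < α) (hp : 0 < p) (hpq : p ≤ q) :
    ∃ C : ℝ, 0 < C ∧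
      ∀ μ : Measure (EuclideanSpace ℝ (Fin d)), IsProbabilityMeasure μ →
        Integrable (fun v => ‖v‖ ^ q) μ →
        (∫ v, ‖v‖ ^ p * Real.exp (-α * ℰ v) ∂μ) / (∫ v, Real.exp (-α * ℰ v) ∂μ)
          ≤ (C * ∫ v, ‖v‖ ^ q ∂μ) ^ (p / q) := by
  have hweight_lo : ∀ v, Real.exp (-(α * (Ebar + C_u))) * Real.exp (-(α * c_u * ‖v‖ ^ l))
      ≤ Real.exp (-α * ℰ v) := fun v => by
    rw [← Real.exp_add, Real.exp_le_exp]
    nlinarith [mul_le_mul_of_nonneg_left (hgrow_hi v) hα.le]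
  have hweight_hi : ∀ v, Real.exp (-α * ℰ v)
      ≤ Real.exp (α * (C_l - Ebar)) * Real.exp (-(α * c_l * ‖v‖ ^ l)) := fun v => by
    rw [← Real.exp_add, Real.exp_le_exp]
    nlinarith [mul_le_mul_of_nonneg_left (hgrow_lo v) hα.le]
  exact exists_integral_rpow_norm_mul_div_integral_le (Real.continuous_exp.comp
    (continuous_const.mul hcont)).measurable (Real.exp_pos _) (by positivity) (by positivity) hl
    hweight_lo hweight_hi hp hpq

/-- Quantitative bound on Gibbs-weighted `p`-th moments: there is a constant `C`
(depending only on the fixed data) such that for every probability measure `μ`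
with finite `q`-th moment,
`(∫‖v‖^p e^{−αℰ} dμ)/(∫e^{−αℰ} dμ) ≤ (C ∫‖v‖^q dμ)^{p/q}`. -/
theorem stmt_4 {d : ℕ} (ℰ : EuclideanSpace ℝ (Fin d) → ℝ)
    (Ebar l c_l c_u C_l C_u α p q : ℝ)
    (hcont : Continuous ℰ) (hlb : ∀ v, Ebar ≤ ℰ v)
    (hl : 0 < l) (hcl : 0 < c_l) (hcu : 0 < c_u) (hCl : 0 < C_l) (hCu : 0 < C_u)
    (hgrow_lo : ∀ v, c_l * ‖v‖ ^ l - C_l ≤ ℰ v - Ebar)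
    (hgrow_hi : ∀ v, ℰ v - Ebar ≤ c_u * ‖v‖ ^ l + C_u)
    (hα : 0 < α) (hp : 0 < p) (hpq : p ≤ q) :
    ∃ C : ℝ, 0 < C ∧
      ∀ μ : Measure (EuclideanSpace ℝ (Fin d)), IsProbabilityMeasure μ →
        Integrable (fun v => ‖v‖ ^ q) μ →
        (∫ v, ‖v‖ ^ p * Real.exp (-α * ℰ v) ∂μ) / (∫ v, Real.exp (-α * ℰ v) ∂μ)
          ≤ (C * ∫ v, ‖v‖ ^ q ∂μ) ^ (p / q) :=
  stmt_4_general ℰ Ebar l c_l c_u C_l C_u α p q hcont hl hcl hcu hgrow_lo hgrow_hi hα hp hpq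
end

section
/- Let ℰ: ℝ → ℝ be ℰ(v) = v², α = 1, and define the consensus point v_α(μ) = (∫ v e^{−ℰ(v)} dμ)/(∫ e^{−ℰ(v)} dμ). For n ∈ ℕ let μ_n = δ_n and ν_n = e^{−n}δ_0 + (1 − e^{−n})δ_n. Then v_α(μ_n) = n, v_α(ν_n) = n(1 − e^{−n})/(e^{n²−n} + 1 − e^{−n}), the Wasserstein-1 distance satisfies W₁(μ_n, ν_n) = n e^{−n}, and hence |v_α(μ_n) − v_α(ν_n)| / W₁(μ_n, ν_n) = (1 − (1 − e^{−n})/(e^{n²−n} + 1 − e^{−n})) · e^{n}, which grows exponentially in n. -/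
open MeasureTheory Set

/-- Wasserstein-1 distance between probability measures on `ℝ`. -/
noncomputable def W1 (μ ν : Measure ℝ) : ℝ :=
  sInf {r : ℝ | ∃ π : Measure (ℝ × ℝ), IsProbabilityMeasure π ∧
    π.map Prod.fst = μ ∧ π.map Prod.snd = ν ∧ r = ∫ x, |x.1 - x.2| ∂π}

/-- Consensus point with `ℰ(v) = v²`, `α = 1`. -/
noncomputable def vcons (μ : Measure ℝ) : ℝ :=
  (∫ v, v * Real.exp (-v ^ 2) ∂μ) / (∫ v, Real.exp (-v ^ 2) ∂μ)

/-!
Moving the mass `e^{-n}` from `n` to `0` costs only `n e^{-n}` in `W₁`, but under the Gibbs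
weight `e^{-v²}` the point `0` outweighs `n` by the factor `e^{n²}`, so the consensus point moves
by almost `n`.
-/

section TwoPointMeasure

variable {α : Type*} [MeasurableSpace α]

lemma integral_ofReal_smul_dirac_add_ofReal_smul_dirac [MeasurableSingletonClass α]
    {E : Type*} [NormedAddCommGroup E] [NormedSpace ℝ E] [CompleteSpace E]
    {p q : ℝ} (hp : 0 ≤ p) (hq : 0 ≤ q) (x y : α) (f : α → E) :
    ∫ v, f v ∂(ENNReal.ofReal p • Measure.dirac x + ENNReal.ofReal q • Measure.dirac y) =
      p • f x + q • f y := by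
  have hf : ∀ a : α, Integrable f (Measure.dirac a) := fun _ => integrable_dirac enorm_lt_top
  rw [integral_add_measure ((hf x).smul_measure ENNReal.ofReal_ne_top)
      ((hf y).smul_measure ENNReal.ofReal_ne_top),
    integral_smul_measure, integral_smul_measure, integral_dirac, integral_dirac,
    ENNReal.toReal_ofReal hp, ENNReal.toReal_ofReal hq]

lemma isProbabilityMeasure_ofReal_smul_dirac_add_ofReal_smul_dirac
    {p : ℝ} (hp₀ : 0 ≤ p) (hp₁ : p ≤ 1) (x y : α) :
    IsProbabilityMeasure
      (ENNReal.ofReal p • Measure.dirac x + ENNReal.ofReal (1 - p) • Measure.dirac y) :=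
  ⟨by simp [← ENNReal.ofReal_add hp₀ (sub_nonneg.mpr hp₁)]⟩

end TwoPointMeasure

lemma integral_abs_sub_eq_of_map_fst_eq_dirac {a : ℝ} {π : Measure (ℝ × ℝ)}
    (hπ : π.map Prod.fst = Measure.dirac a) :
    ∫ x, |x.1 - x.2| ∂π = ∫ y, |a - y| ∂(π.map Prod.snd) := by
  have hfst : ∀ᵐ x ∂π, x.1 = a :=
    ae_of_ae_map (p := (· = a)) measurable_fst.aemeasurable (by rw [hπ, ae_dirac_eq]; rfl)
  rw [integral_map measurable_snd.aemeasurable (by fun_prop)]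
  refine integral_congr_ae ?_
  filter_upwards [hfst] with x hx
  rw [hx]

/-- The only coupling of `δₐ` with `ν` is `δₐ ⊗ ν`. -/
lemma W1_dirac_left (a : ℝ) (ν : Measure ℝ) [IsProbabilityMeasure ν] :
    W1 (Measure.dirac a) ν = ∫ y, |a - y| ∂ν := by
  have hcosts : {r : ℝ | ∃ π : Measure (ℝ × ℝ), IsProbabilityMeasure π ∧
      π.map Prod.fst = Measure.dirac a ∧ π.map Prod.snd = ν ∧ r = ∫ x, |x.1 - x.2| ∂π} =
      {∫ y, |a - y| ∂ν} := by
    ext r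
    constructor
    · rintro ⟨π, -, hfst, hsnd, rfl⟩
      rw [integral_abs_sub_eq_of_map_fst_eq_dirac hfst, hsnd, mem_singleton_iff]
    · rintro rfl
      have hfst : ((Measure.dirac a).prod ν).map Prod.fst = Measure.dirac a := by simp
      refine ⟨(Measure.dirac a).prod ν, inferInstance, hfst, by simp, ?_⟩
      rw [integral_abs_sub_eq_of_map_fst_eq_dirac hfst, Measure.map_snd_prod, measure_univ,
        one_smul]
  rw [W1, hcosts, csInf_singleton]

lemma vcons_dirac (a : ℝ) : vcons (Measure.dirac a) = a := by
  rw [vcons, integral_dirac, integral_dirac, mul_div_cancel_right₀ _ (Real.exp_pos _).ne']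

lemma vcons_ofReal_smul_dirac_add_ofReal_smul_dirac
    {p q : ℝ} (hp : 0 ≤ p) (hq : 0 ≤ q) (x y : ℝ) :
    vcons (ENNReal.ofReal p • Measure.dirac x + ENNReal.ofReal q • Measure.dirac y) =
      (p * (x * Real.exp (-x ^ 2)) + q * (y * Real.exp (-y ^ 2))) /
        (p * Real.exp (-x ^ 2) + q * Real.exp (-y ^ 2)) := by
  simp only [vcons, integral_ofReal_smul_dirac_add_ofReal_smul_dirac hp hq, smul_eq_mul]

section MixtureWithDiracZero

variable {p : ℝ} (hp₀ : 0 ≤ p) (hp₁ : p ≤ 1) (y : ℝ)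
include hp₀ hp₁

lemma vcons_ofReal_smul_dirac_zero_add :
    vcons (ENNReal.ofReal p • Measure.dirac 0 + ENNReal.ofReal (1 - p) • Measure.dirac y) =
      y * (1 - p) / (p * Real.exp (y ^ 2) + 1 - p) := by
  have hsplit : Real.exp (y ^ 2) * Real.exp (-y ^ 2) = 1 := by
    rw [← Real.exp_add, add_neg_cancel, Real.exp_zero]
  have hzero : Real.exp (-(0 : ℝ) ^ 2) = 1 := by simp
  have hgibbs_pos := Real.exp_pos (-y ^ 2)
  have hgibbs_le : Real.exp (-y ^ 2) ≤ 1 := Real.exp_le_one_iff.mpr (by nlinarith [sq_nonneg y])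
  rw [vcons_ofReal_smul_dirac_add_ofReal_smul_dirac hp₀ (sub_nonneg.mpr hp₁), hzero,
    div_eq_div_iff (by nlinarith) (by nlinarith [Real.one_le_exp (sq_nonneg y)])]
  linear_combination y * (1 - p) * p * hsplit

lemma W1_dirac_ofReal_smul_dirac_zero_add :
    W1 (Measure.dirac y)
      (ENNReal.ofReal p • Measure.dirac 0 + ENNReal.ofReal (1 - p) • Measure.dirac y) =
      p * |y| := by
  have := isProbabilityMeasure_ofReal_smul_dirac_add_ofReal_smul_dirac hp₀ hp₁ (0 : ℝ) y
  rw [W1_dirac_left, integral_ofReal_smul_dirac_add_ofReal_smul_dirac hp₀ (sub_nonneg.mpr hp₁)]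
  simp

end MixtureWithDiracZero

/-- The exponential-coefficient example: with `μₙ = δₙ` and
`νₙ = e^{−n}δ₀ + (1−e^{−n})δₙ`, the consensus points and `W₁` distance satisfy the
stated formulas, so the stability ratio grows exponentially in `n`. -/
theorem stmt_5 (n : ℕ) (hn : 1 ≤ n) :
    vcons (Measure.dirac (n : ℝ)) = (n : ℝ) ∧
    vcons (ENNReal.ofReal (Real.exp (-(n : ℝ))) • Measure.dirac (0 : ℝ) +
        ENNReal.ofReal (1 - Real.exp (-(n : ℝ))) • Measure.dirac (n : ℝ)) =
      (n : ℝ) * (1 - Real.exp (-(n : ℝ))) /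
        (Real.exp ((n : ℝ) ^ 2 - n) + 1 - Real.exp (-(n : ℝ))) ∧
    W1 (Measure.dirac (n : ℝ))
        (ENNReal.ofReal (Real.exp (-(n : ℝ))) • Measure.dirac (0 : ℝ) +
          ENNReal.ofReal (1 - Real.exp (-(n : ℝ))) • Measure.dirac (n : ℝ)) =
      (n : ℝ) * Real.exp (-(n : ℝ)) ∧
    |vcons (Measure.dirac (n : ℝ)) -
        vcons (ENNReal.ofReal (Real.exp (-(n : ℝ))) • Measure.dirac (0 : ℝ) +
          ENNReal.ofReal (1 - Real.exp (-(n : ℝ))) • Measure.dirac (n : ℝ))| /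
      W1 (Measure.dirac (n : ℝ))
        (ENNReal.ofReal (Real.exp (-(n : ℝ))) • Measure.dirac (0 : ℝ) +
          ENNReal.ofReal (1 - Real.exp (-(n : ℝ))) • Measure.dirac (n : ℝ)) =
      (1 - (1 - Real.exp (-(n : ℝ))) /
          (Real.exp ((n : ℝ) ^ 2 - n) + 1 - Real.exp (-(n : ℝ)))) * Real.exp (n : ℝ) := by
  set E := Real.exp (-(n : ℝ)) with hE
  have hE₀ : 0 ≤ E := (Real.exp_pos _).le
  have hE₁ : E ≤ 1 := Real.exp_le_one_iff.mpr (by simp)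
  have hgibbs : E * Real.exp ((n : ℝ) ^ 2) = Real.exp ((n : ℝ) ^ 2 - n) := by
    rw [hE, ← Real.exp_add, neg_add_eq_sub]
  have hv := vcons_ofReal_smul_dirac_zero_add hE₀ hE₁ n
  have hw := W1_dirac_ofReal_smul_dirac_zero_add hE₀ hE₁ n
  rw [hgibbs] at hv
  rw [abs_of_nonneg n.cast_nonneg, mul_comm] at hw
  refine ⟨vcons_dirac _, hv, hw, ?_⟩
  have hratio : (1 - E) / (Real.exp ((n : ℝ) ^ 2 - n) + 1 - E) ≤ 1 := by
    rw [div_le_one (by linarith [Real.exp_pos ((n : ℝ) ^ 2 - n)])]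
    linarith [Real.exp_pos ((n : ℝ) ^ 2 - n)]
  have hn₀ : (n : ℝ) ≠ 0 := Nat.cast_ne_zero.mpr (by omega)
  rw [vcons_dirac, hv, hw, mul_div_assoc, ← mul_one_sub,
    abs_of_nonneg (mul_nonneg n.cast_nonneg (sub_nonneg.mpr hratio)), mul_div_mul_left _ _ hn₀,
    div_eq_mul_inv, hE, ← Real.exp_neg, neg_neg]
end

section
/- Let ℰ: ℝ^d → ℝ be locally Lipschitz with |ℰ(u) − ℰ(v)| ≤ L_ℰ(1 + ‖u‖₂ + ‖v‖₂)^s ‖u−v‖₂ and satisfy the growth bounds c_l‖v‖₂^l − C_l ≤ ℰ(v) − Ě ≤ c_u‖v‖₂^l + C_u with l > 0, and fix α > 0. Then the functions g(v) = v e^{−αℰ(v)} and h(v) = e^{−αℰ(v)} satisfy: there is a constant L depending only on α, L_ℰ, l, c_l, C_l, Ě such that for all u, v, max(‖g(u) − g(v)‖₂, |h(u) − h(v)|) ≤ L‖u − v‖₂ (i.e., with exponent ξ = 0). -/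
lemma abs_exp_sub_exp_le' (a b : ℝ) :
    |Real.exp a - Real.exp b| ≤ max (Real.exp a) (Real.exp b) * |a - b| := by
  wlog h : b ≤ a generalizing a b
  · rw [abs_sub_comm, abs_sub_comm a b, max_comm]
    exact this b a (le_of_not_ge h)
  rw [abs_of_nonneg (sub_nonneg.2 (Real.exp_le_exp.2 h)), abs_of_nonneg (sub_nonneg.2 h),
    max_eq_left (Real.exp_le_exp.2 h)]
  have h1 := Real.add_one_le_exp (b - a)
  have h2 : Real.exp a * Real.exp (b - a) = Real.exp b := by
    rw [← Real.exp_add]; ring_nf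
  nlinarith [Real.exp_pos a, Real.exp_pos b]

lemma poly_exp_bound' (c l p : ℝ) (hc : 0 < c) (hl : 0 < l) (hp : 0 ≤ p) :
    ∃ M : ℝ, 1 ≤ M ∧ ∀ t : ℝ, 0 ≤ t → (1 + t) ^ p * Real.exp (-(c * t ^ l)) ≤ M := by
  set n : ℕ := ⌈p / l⌉₊ + 1 with hn
  have hn0 : (0:ℝ) < n := by positivity
  have hpln : p ≤ l * n := by
    have h1 : p / l ≤ (n : ℝ) := by
      refine (Nat.le_ceil _).trans ?_
      exact_mod_cast Nat.le_succ _
    calc p = l * (p / l) := by field_simp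
    _ ≤ l * n := by nlinarith
  set β : ℝ := c / n with hβ
  have hβ0 : 0 < β := by positivity
  set B : ℝ := max 1 (1 / β) with hB
  have hB1 : (1:ℝ) ≤ B := le_max_left _ _
  have hBβ : 1 ≤ B * β := by
    have : 1 / β ≤ B := le_max_right _ _
    calc (1:ℝ) = (1/β) * β := by field_simp
    _ ≤ B * β := by nlinarith
  have key : ∀ x : ℝ, 0 ≤ x → 1 + x ≤ B * Real.exp (β * x) := by
    intro x hx
    have h1 := Real.add_one_le_exp (β * x)
    nlinarith [Real.exp_pos (β * x)]
  refine ⟨2 ^ p * B ^ n, ?_, ?_⟩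
  · have h1 : (1:ℝ) ≤ 2 ^ p := Real.one_le_rpow (by norm_num) hp
    have h2 : (1:ℝ) ≤ B ^ n := one_le_pow₀ hB1
    nlinarith
  intro t ht
  set x : ℝ := t ^ l with hx
  have hx0 : 0 ≤ x := Real.rpow_nonneg ht l
  have hmax1 : (1:ℝ) ≤ max 1 t := le_max_left _ _
  have step1 : (1 + t) ^ p ≤ 2 ^ p * (max 1 t) ^ p := by
    rw [← Real.mul_rpow (by norm_num) (by linarith)]
    exact Real.rpow_le_rpow (by linarith) (by
      rcases le_total t 1 with h | h
      · rw [max_eq_left h]; linarith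
      · rw [max_eq_right h]; linarith) hp
  have step2 : (max 1 t) ^ p ≤ (max 1 t) ^ (l * (n:ℝ)) :=
    Real.rpow_le_rpow_of_exponent_le hmax1 hpln
  have step3 : (max 1 t) ^ (l * (n:ℝ)) = ((max 1 t) ^ l) ^ n := by
    rw [Real.rpow_mul (by linarith), Real.rpow_natCast]
  have step4 : ((max 1 t) ^ l) ^ n ≤ (1 + x) ^ n := by
    apply pow_le_pow_left₀ (Real.rpow_nonneg (by linarith) l)
    rcases le_total t 1 with h | h
    · rw [max_eq_left h, Real.one_rpow]; linarith
    · rw [max_eq_right h]; simp only [hx]; linarith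
  have step5 : (1 + x) ^ n ≤ B ^ n * Real.exp (c * x) := by
    have h1 : (1 + x) ^ n ≤ (B * Real.exp (β * x)) ^ n :=
      pow_le_pow_left₀ (by linarith) (key x hx0) n
    have h2 : (B * Real.exp (β * x)) ^ n = B ^ n * Real.exp ((n:ℝ) * (β * x)) := by
      rw [mul_pow, ← Real.exp_nat_mul]
    have h3 : (n:ℝ) * (β * x) = c * x := by
      rw [hβ]; field_simp
    rw [h2, h3] at h1
    exact h1
  have hchain : (1 + t) ^ p ≤ 2 ^ p * (B ^ n * Real.exp (c * x)) := by
    have h2p : (0:ℝ) < 2 ^ p := Real.rpow_pos_of_pos (by norm_num) p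
    calc (1 + t) ^ p ≤ 2 ^ p * (max 1 t) ^ p := step1
    _ ≤ 2 ^ p * ((max 1 t) ^ (l * (n:ℝ))) := by nlinarith [step2]
    _ = 2 ^ p * (((max 1 t) ^ l) ^ n) := by rw [step3]
    _ ≤ 2 ^ p * ((1 + x) ^ n) := by nlinarith [step4]
    _ ≤ 2 ^ p * (B ^ n * Real.exp (c * x)) := by nlinarith [step5]
  have hexp : Real.exp (c * x) * Real.exp (-(c * x)) = 1 := by
    rw [← Real.exp_add]; simp
  have hepos : 0 < Real.exp (-(c * x)) := Real.exp_pos _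
  calc (1 + t) ^ p * Real.exp (-(c * x)) ≤ 2 ^ p * (B ^ n * Real.exp (c * x)) * Real.exp (-(c * x)) := by
        nlinarith [hchain]
  _ = 2 ^ p * B ^ n := by
        rw [mul_assoc, mul_assoc, hexp]; ring
open MeasureTheory Set

set_option maxHeartbeats 1000000 in
/-- For a coercive, locally Lipschitz objective `ℰ` with growth exponent `l > 0`, the
weighted functions `g(v) = v e^{−αℰ(v)}` and `h(v) = e^{−αℰ(v)}` are globally Lipschitz
(exponent `ξ = 0`). -/
theorem stmt_7 {d : ℕ} (ℰ : EuclideanSpace ℝ (Fin d) → ℝ)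
    (Ebar s l c_l c_u C_l C_u Lℰ α : ℝ)
    (hLℰ : 0 < Lℰ) (hs : 0 ≤ s)
    (hlipE : ∀ u v, |ℰ u - ℰ v| ≤ Lℰ * (1 + ‖u‖ + ‖v‖) ^ s * ‖u - v‖)
    (hlb : ∀ v, Ebar ≤ ℰ v)
    (hl : 0 < l) (hcl : 0 < c_l) (hcu : 0 < c_u) (hCl : 0 < C_l) (hCu : 0 < C_u)
    (hgrow_lo : ∀ v, c_l * ‖v‖ ^ l - C_l ≤ ℰ v - Ebar)
    (hgrow_hi : ∀ v, ℰ v - Ebar ≤ c_u * ‖v‖ ^ l + C_u)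
    (hα : 0 < α) :
    ∃ L : ℝ, 0 < L ∧ ∀ u v : EuclideanSpace ℝ (Fin d),
      max ‖Real.exp (-α * ℰ u) • u - Real.exp (-α * ℰ v) • v‖
          |Real.exp (-α * ℰ u) - Real.exp (-α * ℰ v)| ≤ L * ‖u - v‖ := by
  have h2s : (0:ℝ) < 2 ^ s := Real.rpow_pos_of_pos (by norm_num) s
  set c : ℝ := α * c_l with hc
  have hcpos : 0 < c := mul_pos hα hcl
  set K : ℝ := Real.exp (α * (C_l - Ebar)) with hK
  have hKpos : 0 < K := Real.exp_pos _
  obtain ⟨M, hM1, hMb⟩ := poly_exp_bound' c l (s + 1) hcpos hl (by linarith)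
  have hMpos : 0 < M := lt_of_lt_of_le one_pos hM1
  set X : ℝ := α * Lℰ * 2 ^ s with hX
  have hXpos : 0 < X := by positivity
  -- pointwise bound on the weight
  have hw : ∀ w : EuclideanSpace ℝ (Fin d),
      Real.exp (-α * ℰ w) ≤ K * Real.exp (-(c * ‖w‖ ^ l)) := by
    intro w
    rw [← Real.exp_add]
    apply Real.exp_le_exp.2
    rw [hc]
    nlinarith [mul_le_mul_of_nonneg_left (hgrow_lo w) hα.le]
  have hwK : ∀ w : EuclideanSpace ℝ (Fin d), Real.exp (-α * ℰ w) ≤ K := by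
    intro w
    refine (hw w).trans ?_
    have h1 : Real.exp (-(c * ‖w‖ ^ l)) ≤ 1 := by
      rw [Real.exp_le_one_iff]
      have : 0 ≤ ‖w‖ ^ l := Real.rpow_nonneg (norm_nonneg _) l
      nlinarith
    nlinarith
  have hpoly1 : ∀ t : ℝ, 0 ≤ t → t ≤ (1 + t) ^ (s + 1) := by
    intro t ht
    have h2 : (1 + t) ^ (1:ℝ) ≤ (1 + t) ^ (s + 1) :=
      Real.rpow_le_rpow_of_exponent_le (by linarith) (by linarith)
    rw [Real.rpow_one] at h2
    linarith
  have hwM : ∀ w : EuclideanSpace ℝ (Fin d), ‖w‖ * Real.exp (-α * ℰ w) ≤ K * M := by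
    intro w
    have h1 := hw w
    have h2 : ‖w‖ * Real.exp (-(c * ‖w‖ ^ l)) ≤ M :=
      le_trans (mul_le_mul_of_nonneg_right (hpoly1 _ (norm_nonneg w))
        (Real.exp_pos _).le) (hMb _ (norm_nonneg w))
    nlinarith [mul_le_mul_of_nonneg_left h1 (norm_nonneg w),
      mul_le_mul_of_nonneg_left h2 hKpos.le]
  have hKMnn : (0:ℝ) ≤ K * M := by positivity
  have hKXnn : (0:ℝ) ≤ K * X := by positivity
  have hKMXnn : (0:ℝ) ≤ K * M * X := by positivity
  refine ⟨K * (1 + M) * (2 + X), by positivity, fun u v => ?_⟩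
  set L : ℝ := K * (1 + M) * (2 + X) with hL
  have hLpos : 0 < L := by positivity
  have hLge2K : 2 * K ≤ L := by nlinarith
  have hLge2KM : 2 * (K * M) ≤ L := by nlinarith
  have hLgeG : K + X * (K * M) ≤ L := by nlinarith
  have hLgeH : X * (K * M) ≤ L := by nlinarith
  have hnuv : (0:ℝ) ≤ ‖u - v‖ := norm_nonneg _
  rcases le_total ‖u - v‖ 1 with h1 | h1
  · -- near case
    set m : ℝ := min ‖u‖ ‖v‖ with hm
    have hm0 : 0 ≤ m := le_min (norm_nonneg _) (norm_nonneg _)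
    have hd1 : ‖u‖ ≤ ‖v‖ + ‖u - v‖ := by
      have := norm_sub_norm_le u v; linarith
    have hd2 : ‖v‖ ≤ ‖u‖ + ‖u - v‖ := by
      have := norm_sub_norm_le v u; rw [norm_sub_rev] at this; linarith
    have hsum : 1 + ‖u‖ + ‖v‖ ≤ 2 * (1 + m) := by
      rcases le_total ‖u‖ ‖v‖ with h | h
      · rw [hm, min_eq_left h]; linarith
      · rw [hm, min_eq_right h]; linarith
    have hvm : ‖v‖ ≤ 1 + m := by
      rcases le_total ‖u‖ ‖v‖ with h | h
      · rw [hm, min_eq_left h]; linarith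
      · rw [hm, min_eq_right h]; linarith
    have hepos : (0:ℝ) < Real.exp (-(c * m ^ l)) := Real.exp_pos _
    have hpows : (0:ℝ) < (1 + m) ^ s := Real.rpow_pos_of_pos (by linarith) s
    have hEd : |ℰ u - ℰ v| ≤ Lℰ * (2 ^ s * (1 + m) ^ s) * ‖u - v‖ := by
      refine (hlipE u v).trans ?_
      have hb : (1 + ‖u‖ + ‖v‖) ^ s ≤ 2 ^ s * (1 + m) ^ s := by
        rw [← Real.mul_rpow (by norm_num) (by linarith)]
        exact Real.rpow_le_rpow (by positivity) hsum hs
      exact mul_le_mul_of_nonneg_right (mul_le_mul_of_nonneg_left hb hLℰ.le) hnuv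
    have hml : ∀ w : EuclideanSpace ℝ (Fin d), m ≤ ‖w‖ →
        Real.exp (-α * ℰ w) ≤ K * Real.exp (-(c * m ^ l)) := by
      intro w hw'
      refine (hw w).trans ?_
      have h2 : m ^ l ≤ ‖w‖ ^ l := Real.rpow_le_rpow hm0 hw' hl.le
      have h3 : Real.exp (-(c * ‖w‖ ^ l)) ≤ Real.exp (-(c * m ^ l)) := by
        apply Real.exp_le_exp.2; nlinarith
      exact mul_le_mul_of_nonneg_left h3 hKpos.le
    have hexpu := hml u (min_le_left _ _)
    have hexpv := hml v (min_le_right _ _)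
    have hprod : (1 + m) ^ s * Real.exp (-(c * m ^ l)) ≤ M := by
      refine le_trans ?_ (hMb m hm0)
      have h2 : (1 + m) ^ s ≤ (1 + m) ^ (s + 1) :=
        Real.rpow_le_rpow_of_exponent_le (by linarith) (by linarith)
      exact mul_le_mul_of_nonneg_right h2 hepos.le
    have hprod1 := hMb m hm0
    have hsplit : (1 + m) ^ (s + 1) = (1 + m) ^ s * (1 + m) := by
      rw [Real.rpow_add_one (by positivity)]
    -- difference of weights
    have hh : |Real.exp (-α * ℰ u) - Real.exp (-α * ℰ v)| ≤
        K * Real.exp (-(c * m ^ l)) * (α * |ℰ u - ℰ v|) := by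
      refine (abs_exp_sub_exp_le' _ _).trans ?_
      have hmax : max (Real.exp (-α * ℰ u)) (Real.exp (-α * ℰ v)) ≤
          K * Real.exp (-(c * m ^ l)) := max_le hexpu hexpv
      have habs : |(-α * ℰ u) - (-α * ℰ v)| = α * |ℰ u - ℰ v| := by
        rw [show (-α * ℰ u) - (-α * ℰ v) = α * (ℰ v - ℰ u) by ring, abs_mul,
          abs_of_pos hα, abs_sub_comm]
      rw [habs]
      exact mul_le_mul_of_nonneg_right hmax (by positivity)
    have hstep : K * Real.exp (-(c * m ^ l)) * (α * |ℰ u - ℰ v|) ≤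
        K * Real.exp (-(c * m ^ l)) * (α * (Lℰ * (2 ^ s * (1 + m) ^ s) * ‖u - v‖)) := by
      refine mul_le_mul_of_nonneg_left (mul_le_mul_of_nonneg_left hEd hα.le) ?_
      positivity
    have hKprod : K * ((1 + m) ^ s * Real.exp (-(c * m ^ l))) ≤ K * M :=
      mul_le_mul_of_nonneg_left hprod hKpos.le
    have hhL : |Real.exp (-α * ℰ u) - Real.exp (-α * ℰ v)| ≤ X * (K * M) * ‖u - v‖ := by
      refine (hh.trans hstep).trans ?_
      calc K * Real.exp (-(c * m ^ l)) * (α * (Lℰ * (2 ^ s * (1 + m) ^ s) * ‖u - v‖))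
          = X * (K * ((1 + m) ^ s * Real.exp (-(c * m ^ l)))) * ‖u - v‖ := by
            rw [hX]; ring
        _ ≤ X * (K * M) * ‖u - v‖ :=
            mul_le_mul_of_nonneg_right (mul_le_mul_of_nonneg_left hKprod hXpos.le) hnuv
    -- g-part
    have hgsplit : Real.exp (-α * ℰ u) • u - Real.exp (-α * ℰ v) • v =
        Real.exp (-α * ℰ u) • (u - v) +
          (Real.exp (-α * ℰ u) - Real.exp (-α * ℰ v)) • v := by
      rw [smul_sub, sub_smul]; abel
    have hgL : ‖Real.exp (-α * ℰ u) • u - Real.exp (-α * ℰ v) • v‖ ≤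
        (K + X * (K * M)) * ‖u - v‖ := by
      rw [hgsplit]
      refine (norm_add_le _ _).trans ?_
      rw [norm_smul, norm_smul, Real.norm_eq_abs,
        abs_of_pos (Real.exp_pos _), Real.norm_eq_abs]
      have hA : Real.exp (-α * ℰ u) * ‖u - v‖ ≤ K * ‖u - v‖ :=
        mul_le_mul_of_nonneg_right (hwK u) hnuv
      have hB : |Real.exp (-α * ℰ u) - Real.exp (-α * ℰ v)| * ‖v‖ ≤
          X * (K * M) * ‖u - v‖ := by
        have hRnn : (0:ℝ) ≤ K * Real.exp (-(c * m ^ l)) *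
            (α * (Lℰ * (2 ^ s * (1 + m) ^ s) * ‖u - v‖)) := by
          refine mul_nonneg (mul_nonneg hKpos.le hepos.le) (mul_nonneg hα.le ?_)
          exact mul_nonneg (mul_nonneg hLℰ.le (mul_nonneg h2s.le hpows.le)) hnuv
        have hhv : |Real.exp (-α * ℰ u) - Real.exp (-α * ℰ v)| * ‖v‖ ≤
            (K * Real.exp (-(c * m ^ l)) * (α * (Lℰ * (2 ^ s * (1 + m) ^ s) * ‖u - v‖)))
              * (1 + m) :=
          mul_le_mul (hh.trans hstep) hvm (norm_nonneg v) hRnn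
        refine hhv.trans ?_
        have hKprod1 : K * ((1 + m) ^ (s + 1) * Real.exp (-(c * m ^ l))) ≤ K * M :=
          mul_le_mul_of_nonneg_left hprod1 hKpos.le
        calc (K * Real.exp (-(c * m ^ l)) * (α * (Lℰ * (2 ^ s * (1 + m) ^ s) * ‖u - v‖)))
              * (1 + m)
            = X * (K * ((1 + m) ^ (s + 1) * Real.exp (-(c * m ^ l)))) * ‖u - v‖ := by
              rw [hX, hsplit]; ring
          _ ≤ X * (K * M) * ‖u - v‖ :=
              mul_le_mul_of_nonneg_right (mul_le_mul_of_nonneg_left hKprod1 hXpos.le) hnuv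
      linarith
    exact max_le (hgL.trans (mul_le_mul_of_nonneg_right hLgeG hnuv))
      (hhL.trans (mul_le_mul_of_nonneg_right hLgeH hnuv))
  · -- far case
    have hgbig : ‖Real.exp (-α * ℰ u) • u - Real.exp (-α * ℰ v) • v‖ ≤ 2 * (K * M) := by
      refine (norm_sub_le _ _).trans ?_
      rw [norm_smul, norm_smul, Real.norm_eq_abs, Real.norm_eq_abs,
        abs_of_pos (Real.exp_pos _), abs_of_pos (Real.exp_pos _)]
      nlinarith [hwM u, hwM v]
    have hhbig : |Real.exp (-α * ℰ u) - Real.exp (-α * ℰ v)| ≤ 2 * K := by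
      have h3 : |Real.exp (-α * ℰ u) - Real.exp (-α * ℰ v)| ≤
          Real.exp (-α * ℰ u) + Real.exp (-α * ℰ v) := by
        rw [abs_sub_le_iff]
        constructor <;> nlinarith [Real.exp_pos (-α * ℰ u), Real.exp_pos (-α * ℰ v)]
      nlinarith [hwK u, hwK v]
    have hL1 : L ≤ L * ‖u - v‖ := by nlinarith
    refine max_le (hgbig.trans (hLge2KM.trans hL1)) (hhbig.trans (hLge2K.trans hL1))
end
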